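/- A polynomial f ∈ ℂ[x₀,x₁,x₂,x₃] is invariant under all five substitutions h₀₀₀₁ : (x₀,x₁,x₂,x₃) ↦ (x₀,−x₁,x₂,−x₃), h₀₀₁₀ : (x₀,x₁,x₂,x₃) ↦ (x₀,x₁,−x₂,−x₃), h₀₁₀₀ : (x₀,x₁,x₂,x₃) ↦ (x₁,x₀,x₃,x₂), h₁₀₀₀ : (x₀,x₁,x₂,x₃) ↦ (x₂,x₃,x₀,x₁), and c : (x₀,x₁,x₂,x₃) ↦ (ix₀,ix₁,ix₂,ix₃) if and only if f lies in the ℂ-subalgebra generated by the five polynomials p₀ := x₀⁴+x₁⁴+x₂⁴+x₃⁴, p₁ := 2(x₀²x₁²+x₂²x₃²), p₂ := 2(x₀²x₂²+x₁²x₃²), p₃ := 2(x₀²x₃²+x₁²x₂²), p₄ := 4x₀x₁x₂x₃. In other words, the ring of invariants of the Heisenberg group acting via the Schrödinger representation equals ℂ[p₀,p₁,p₂,p₃,p₄]. -/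

import Mathlib

open MvPolynomial

/- A polynomial `f ∈ ℂ[x₀,x₁,x₂,x₃]` is invariant under the five substitutions
generating the (image of the) Heisenberg group iff it lies in the `ℂ`-subalgebra
generated by `p₀, p₁, p₂, p₃, p₄`. -/

/-- The substitution `h₀₀₀₁ : (x₀,x₁,x₂,x₃) ↦ (x₀,−x₁,x₂,−x₃)`. -/
noncomputable def h0001 : MvPolynomial (Fin 4) ℂ →ₐ[ℂ] MvPolynomial (Fin 4) ℂ :=
  aeval ![X 0, -X 1, X 2, -X 3]

/-- The substitution `h₀₀₁₀ : (x₀,x₁,x₂,x₃) ↦ (x₀,x₁,−x₂,−x₃)`. -/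
noncomputable def h0010 : MvPolynomial (Fin 4) ℂ →ₐ[ℂ] MvPolynomial (Fin 4) ℂ :=
  aeval ![X 0, X 1, -X 2, -X 3]

/-- The substitution `h₀₁₀₀ : (x₀,x₁,x₂,x₃) ↦ (x₁,x₀,x₃,x₂)`. -/
noncomputable def h0100 : MvPolynomial (Fin 4) ℂ →ₐ[ℂ] MvPolynomial (Fin 4) ℂ :=
  aeval ![X 1, X 0, X 3, X 2]

/-- The substitution `h₁₀₀₀ : (x₀,x₁,x₂,x₃) ↦ (x₂,x₃,x₀,x₁)`. -/
noncomputable def h1000 : MvPolynomial (Fin 4) ℂ →ₐ[ℂ] MvPolynomial (Fin 4) ℂ :=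
  aeval ![X 2, X 3, X 0, X 1]

/-- The substitution `c : (x₀,x₁,x₂,x₃) ↦ (ix₀,ix₁,ix₂,ix₃)`. -/
noncomputable def cmap : MvPolynomial (Fin 4) ℂ →ₐ[ℂ] MvPolynomial (Fin 4) ℂ :=
  aeval ![C Complex.I * X 0, C Complex.I * X 1, C Complex.I * X 2, C Complex.I * X 3]

/-- `p₀ := x₀⁴+x₁⁴+x₂⁴+x₃⁴`. -/
noncomputable def p0 : MvPolynomial (Fin 4) ℂ := X 0 ^ 4 + X 1 ^ 4 + X 2 ^ 4 + X 3 ^ 4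

/-- `p₁ := 2(x₀²x₁²+x₂²x₃²)`. -/
noncomputable def p1 : MvPolynomial (Fin 4) ℂ := 2 * (X 0 ^ 2 * X 1 ^ 2 + X 2 ^ 2 * X 3 ^ 2)

/-- `p₂ := 2(x₀²x₂²+x₁²x₃²)`. -/
noncomputable def p2 : MvPolynomial (Fin 4) ℂ := 2 * (X 0 ^ 2 * X 2 ^ 2 + X 1 ^ 2 * X 3 ^ 2)

/-- `p₃ := 2(x₀²x₃²+x₁²x₂²)`. -/
noncomputable def p3 : MvPolynomial (Fin 4) ℂ := 2 * (X 0 ^ 2 * X 3 ^ 2 + X 1 ^ 2 * X 2 ^ 2)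

/-- `p₄ := 4x₀x₁x₂x₃`. -/
noncomputable def p4 : MvPolynomial (Fin 4) ℂ := 4 * (X 0 * X 1 * X 2 * X 3)

/-!
Invariance under `h₀₀₀₁`, `h₀₀₁₀` and `c² = -1` means that in every monomial of `f` the exponents
are all even or all odd, so `f = F(x²) + x₀x₁x₂x₃ G(x²)`, and this decomposition is unique
(flip the sign of `x₀`). The permutations and `c` fix `x₀x₁x₂x₃` and act on `F(x²)` as
`y ↦ π y` and `y ↦ -y` act on `F`, so `F` and `G` are invariant under `y ↦ -y` and under the
Klein four-group of permutations of the variables. The Hadamard change of variables `w = H y`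
turns these permutations into sign changes, so the same parity argument puts `F` and `G` in
`ℂ[w₀², w₁², w₂², w₃², w₀w₁w₂w₃]`; under `y ↦ x²` these generators become polynomials in
`p₀, …, p₄`.
-/

namespace MvPolynomial

variable {σ R : Type*} [CommRing R]

noncomputable def scaleVars (e : σ → R) : MvPolynomial σ R →ₐ[R] MvPolynomial σ R :=
  aeval fun i => C (e i) * X i

@[simp] lemma scaleVars_X (e : σ → R) (i : σ) : scaleVars e (X i) = C (e i) * X i :=
  aeval_X _ _

lemma scaleVars_monomial [Fintype σ] (e : σ → R) (a : σ →₀ ℕ) (r : R) :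
    scaleVars e (monomial a r) = monomial a ((∏ i, e i ^ a i) * r) := by
  rw [scaleVars, aeval_monomial, monomial_eq, Finsupp.prod_fintype _ _ (fun _ => pow_zero _),
    Finsupp.prod_fintype _ _ (fun _ => pow_zero _)]
  simp only [mul_pow, ← C_pow, Finset.prod_mul_distrib, ← map_prod, algebraMap_eq, map_mul]
  ring

lemma coeff_scaleVars [Fintype σ] (e : σ → R) (f : MvPolynomial σ R) (a : σ →₀ ℕ) :
    coeff a (scaleVars e f) = (∏ i, e i ^ a i) * coeff a f := by
  classical
  induction f using MvPolynomial.induction_on' with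
  | monomial b r =>
    rw [scaleVars_monomial, coeff_monomial, coeff_monomial]
    split_ifs with h
    · rw [h]
    · rw [mul_zero]
  | add p q hp hq => rw [map_add, coeff_add, coeff_add, hp, hq, mul_add]

lemma prod_pow_eq_one_of_scaleVars_eq [Fintype σ] [IsDomain R] {e : σ → R}
    {f : MvPolynomial σ R} (hf : scaleVars e f = f) {a : σ →₀ ℕ} (ha : a ∈ f.support) :
    ∏ i, e i ^ a i = 1 := by
  have h := coeff_scaleVars e f a
  rw [hf] at h
  exact (mul_eq_right₀ (mem_support_iff.mp ha)).mp h.symm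

lemma scaleVars_scaleVars (e e' : σ → R) (f : MvPolynomial σ R) :
    scaleVars e (scaleVars e' f) = scaleVars (e * e') f := by
  rw [← AlgHom.comp_apply]
  congr 1
  refine algHom_ext fun i => ?_
  simp [mul_comm, mul_left_comm]

lemma scaleVars_one : scaleVars (1 : σ → R) = AlgHom.id R _ :=
  algHom_ext fun i => by simp

lemma scaleVars_expand (e : σ → R) (p : ℕ) (f : MvPolynomial σ R) :
    scaleVars e (expand p f) = expand p (scaleVars (e ^ p) f) := by
  rw [← AlgHom.comp_apply, ← AlgHom.comp_apply]
  congr 1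
  refine algHom_ext fun i => ?_
  simp [mul_pow]

lemma scaleVars_prod_X [Fintype σ] (e : σ → R) :
    scaleVars e (∏ i, X i) = C (∏ i, e i) * ∏ i, X i := by
  simp [map_prod, Finset.prod_mul_distrib]

lemma rename_prod_X [Fintype σ] (π : Equiv.Perm σ) :
    rename π (∏ i, X i : MvPolynomial σ R) = ∏ i, X i := by
  simp only [map_prod, rename_X]
  exact Equiv.prod_comp π _


lemma prod_X_eq_monomial [Fintype σ] :
    (∏ i, X i : MvPolynomial σ R) = monomial (∑ i, Finsupp.single i 1) 1 :=
  (monomial_sum_one _ _).symm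

lemma exists_eq_expand_two_add_prod_X_mul [Fintype σ] {f : MvPolynomial σ R}
    (hf : ∀ a ∈ f.support, (∀ i, Even (a i)) ∨ ∀ i, Odd (a i)) :
    ∃ F G, f = expand 2 F + (∏ i, X i) * expand 2 G := by
  let L := (expand 2).toLinearMap.coprod
    (LinearMap.mulLeft R (∏ i, X i) ∘ₗ (expand 2 : MvPolynomial σ R →ₐ[R] _).toLinearMap)
  suffices f ∈ LinearMap.range L by
    obtain ⟨⟨F, G⟩, hFG⟩ := this
    exact ⟨F, G, hFG.symm⟩
  rw [f.as_sum]
  refine Submodule.sum_mem _ fun a ha => ?_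
  let b : σ →₀ ℕ := a.mapRange (· / 2) (Nat.zero_div 2)
  rcases hf a ha with heven | hodd
  · refine ⟨(monomial b (coeff a f), 0), ?_⟩
    have : 2 • b = a := by
      ext i
      simp [b, Nat.two_mul_div_two_of_even (heven i)]
    simp [L, expand_monomial, this]
  · refine ⟨(0, monomial b (coeff a f)), ?_⟩
    have : (∑ i, Finsupp.single i 1) + 2 • b = a := by
      ext i
      simpa [b, add_comm] using Nat.two_mul_div_two_add_one_of_odd (hodd i)
    simp [L, expand_monomial, prod_X_eq_monomial, monomial_mul, this]

lemma prod_X_ne_zero [Fintype σ] [IsDomain R] : (∏ i, X i : MvPolynomial σ R) ≠ 0 :=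
  Finset.prod_ne_zero_iff.mpr fun i _ => X_ne_zero i

lemma expand_two_add_prod_X_mul_inj [Fintype σ] [IsDomain R] [NeZero (2 : R)] (j : σ)
    {F G F' G' : MvPolynomial σ R}
    (h : expand 2 F + (∏ i, X i) * expand 2 G = expand 2 F' + (∏ i, X i) * expand 2 G') :
    F = F' ∧ G = G' := by
  classical
  set e : σ → R := Pi.mulSingle j (-1)
  have he : ∀ H, scaleVars e (expand 2 H) = expand 2 H := fun H => by
    have he2 : e ^ 2 = 1 := by
      funext i
      rcases eq_or_ne i j with rfl | hij <;> simp [e, *]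
    rw [scaleVars_expand, he2, scaleVars_one, AlgHom.id_apply]
  have hm : scaleVars e (∏ i, X i) = -∏ i, X i := by
    rw [scaleVars_prod_X, Finset.prod_pi_mulSingle' j (-1 : R), if_pos (Finset.mem_univ j)]
    simp
  have h' := congrArg (scaleVars e) h
  simp only [map_add, map_mul, he, hm] at h'
  have hF : (2 : MvPolynomial σ R) * expand 2 F = 2 * expand 2 F' := by
    linear_combination h + h'
  have hG : (2 : MvPolynomial σ R) * ((∏ i, X i) * expand 2 G) =
      2 * ((∏ i, X i) * expand 2 G') := by
    linear_combination h - h'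
  have htwo : (2 : MvPolynomial σ R) ≠ 0 := by
    rw [← map_ofNat C 2]
    exact (C_ne_zero).mpr (NeZero.ne (2 : R))
  exact ⟨expand_injective two_pos (mul_left_cancel₀ htwo hF),
    expand_injective two_pos (mul_left_cancel₀ prod_X_ne_zero (mul_left_cancel₀ htwo hG))⟩

lemma invariant_of_expand_two_add_prod_X_mul [Fintype σ] [IsDomain R] [NeZero (2 : R)] (j : σ)
    {φ φ' : MvPolynomial σ R →ₐ[R] MvPolynomial σ R}
    (hφ : ∀ H, φ (expand 2 H) = expand 2 (φ' H)) (hm : φ (∏ i, X i) = ∏ i, X i)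
    {F G : MvPolynomial σ R}
    (hf : φ (expand 2 F + (∏ i, X i) * expand 2 G) = expand 2 F + (∏ i, X i) * expand 2 G) :
    φ' F = F ∧ φ' G = G :=
  expand_two_add_prod_X_mul_inj j (by rwa [map_add, map_mul, hφ, hφ, hm] at hf)

end MvPolynomial

open MvPolynomial

lemma parity_dichotomy {a : Fin 4 →₀ ℕ} (h13 : Even (a 1 + a 3)) (h23 : Even (a 2 + a 3))
    (hsum : Even (∑ i, a i)) : (∀ i, Even (a i)) ∨ ∀ i, Odd (a i) := by
  rw [Fin.sum_univ_four] at hsum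
  simp only [Fin.forall_fin_succ, Fin.succ_zero_eq_one, Fin.succ_one_eq_two, Fin.reduceSucc,
    IsEmpty.forall_iff, and_true, Nat.even_iff, Nat.odd_iff] at *
  omega

section Hadamard

variable {K : Type*} [Field K]

lemma exists_eq_expand_two_add_prod_X_mul_of_signs [NeZero (2 : K)]
    {f : MvPolynomial (Fin 4) K}
    (h13 : scaleVars ![1, -1, 1, -1] f = f) (h23 : scaleVars ![1, 1, -1, -1] f = f)
    (hneg : scaleVars (-1) f = f) : ∃ F G, f = expand 2 F + (∏ i, X i) * expand 2 G := by
  have hK : (-1 : K) ≠ 1 := fun h => NeZero.ne (2 : K) (by linear_combination -h)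
  refine exists_eq_expand_two_add_prod_X_mul fun a ha => parity_dichotomy ?_ ?_ ?_
  · simpa [Fin.prod_univ_four, ← pow_add, neg_one_pow_eq_one_iff_even hK]
      using prod_pow_eq_one_of_scaleVars_eq h13 ha
  · simpa [Fin.prod_univ_four, ← pow_add, neg_one_pow_eq_one_iff_even hK]
      using prod_pow_eq_one_of_scaleVars_eq h23 ha
  · simpa [Finset.prod_pow_eq_pow_sum, neg_one_pow_eq_one_iff_even hK]
      using prod_pow_eq_one_of_scaleVars_eq hneg ha

def swapHalves : Equiv.Perm (Fin 4) :=
  Function.Involutive.toPerm ![2, 3, 0, 1] fun i => by fin_cases i <;> rfl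

def swapPairs : Equiv.Perm (Fin 4) :=
  Function.Involutive.toPerm ![1, 0, 3, 2] fun i => by fin_cases i <;> rfl

variable (K) in
noncomputable def hadamard : Fin 4 → MvPolynomial (Fin 4) K :=
  ![X 0 + X 1 + X 2 + X 3, X 0 + X 1 - X 2 - X 3, X 0 - X 1 + X 2 - X 3, X 0 - X 1 - X 2 + X 3]

variable (K) in
noncomputable def hadamardSubalgebra : Subalgebra K (MvPolynomial (Fin 4) K) :=
  Algebra.adjoin K (insert (∏ i, hadamard K i) (Set.range fun i => hadamard K i ^ 2))

variable (K) in
noncomputable def invHadamard : MvPolynomial (Fin 4) K →ₐ[K] MvPolynomial (Fin 4) K :=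
  aeval fun i => C 4⁻¹ * hadamard K i

lemma aeval_hadamard_invHadamard [NeZero (2 : K)] (g : MvPolynomial (Fin 4) K) :
    aeval (hadamard K) (invHadamard K g) = g := by
  have h4 : (C (4⁻¹ : K) : MvPolynomial (Fin 4) K) * 4 = 1 := by
    have : (4 : K) ≠ 0 := by
      rw [show (4 : K) = 2 * 2 by norm_num]
      exact mul_ne_zero two_ne_zero two_ne_zero
    rw [← map_ofNat C 4, ← map_mul, inv_mul_cancel₀ this, map_one]
  suffices (aeval (hadamard K)).comp (invHadamard K) = AlgHom.id K _ from
    DFunLike.congr_fun this g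
  refine algHom_ext fun i => ?_
  have hH : aeval (hadamard K) (hadamard K i) = 4 * X i := by
    fin_cases i <;> simp [hadamard] <;> ring
  rw [AlgHom.comp_apply, invHadamard, aeval_X, map_mul, aeval_C, hH, algebraMap_eq, ← mul_assoc,
    h4, one_mul, AlgHom.id_apply]

lemma scaleVars_comp_invHadamard_swapHalves :
    (scaleVars ![1, -1, 1, -1]).comp (invHadamard K) =
      (invHadamard K).comp (rename swapHalves) := by
  refine algHom_ext fun i => ?_
  fin_cases i <;>
    simp [invHadamard, hadamard, swapHalves, Function.Involutive.toPerm, -mul_eq_mul_left_iff] <;>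
    ring

lemma scaleVars_comp_invHadamard_swapPairs :
    (scaleVars ![1, 1, -1, -1]).comp (invHadamard K) =
      (invHadamard K).comp (rename swapPairs) := by
  refine algHom_ext fun i => ?_
  fin_cases i <;>
    simp [invHadamard, hadamard, swapPairs, Function.Involutive.toPerm, -mul_eq_mul_left_iff] <;>
    ring

lemma scaleVars_neg_one_comp_invHadamard :
    (scaleVars (-1)).comp (invHadamard K) = (invHadamard K).comp (scaleVars (-1)) := by
  refine algHom_ext fun i => ?_
  fin_cases i <;> simp [invHadamard, hadamard, -mul_eq_mul_left_iff] <;> ring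

lemma mem_hadamardSubalgebra_of_invariant [NeZero (2 : K)] {g : MvPolynomial (Fin 4) K}
    (hH : rename swapHalves g = g) (hP : rename swapPairs g = g) (hneg : scaleVars (-1) g = g) :
    g ∈ hadamardSubalgebra K := by
  obtain ⟨F, G, hFG⟩ := exists_eq_expand_two_add_prod_X_mul_of_signs (f := invHadamard K g)
    (by rw [← AlgHom.comp_apply, scaleVars_comp_invHadamard_swapHalves, AlgHom.comp_apply, hH])
    (by rw [← AlgHom.comp_apply, scaleVars_comp_invHadamard_swapPairs, AlgHom.comp_apply, hP])
    (by rw [← AlgHom.comp_apply, scaleVars_neg_one_comp_invHadamard, AlgHom.comp_apply, hneg])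
  have hsq : ∀ H : MvPolynomial (Fin 4) K,
      aeval (hadamard K) (expand 2 H) ∈ hadamardSubalgebra K := by
    intro H
    rw [aeval_expand]
    refine Algebra.adjoin_mono (Set.subset_insert _ _) ?_
    rw [← aeval_range]
    exact AlgHom.mem_range_self _ H
  rw [← aeval_hadamard_invHadamard g, hFG, map_add, map_mul, map_prod]
  simp only [aeval_X]
  exact add_mem (hsq F) (mul_mem (Algebra.subset_adjoin (Set.mem_insert _ _)) (hsq G))

end Hadamard

lemma h0001_eq : h0001 = scaleVars ![1, -1, 1, -1] :=
  algHom_ext fun i => by fin_cases i <;> simp [h0001]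

lemma h0010_eq : h0010 = scaleVars ![1, 1, -1, -1] :=
  algHom_ext fun i => by fin_cases i <;> simp [h0010]

lemma h0100_eq : h0100 = rename swapPairs :=
  algHom_ext fun i => by fin_cases i <;> simp [h0100, swapPairs, Function.Involutive.toPerm]

lemma h1000_eq : h1000 = rename swapHalves :=
  algHom_ext fun i => by fin_cases i <;> simp [h1000, swapHalves, Function.Involutive.toPerm]

lemma cmap_eq : cmap = scaleVars fun _ => Complex.I :=
  algHom_ext fun i => by fin_cases i <;> simp [cmap]

lemma cmap_expand_two (H : MvPolynomial (Fin 4) ℂ) :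
    cmap (expand 2 H) = expand 2 (scaleVars (-1) H) := by
  rw [cmap_eq, scaleVars_expand,
    show ((fun _ => Complex.I) ^ 2 : Fin 4 → ℂ) = -1 from funext fun _ => by simp]

lemma cmap_prod_X : cmap (∏ i, X i) = ∏ i, X i := by
  rw [cmap_eq, scaleVars_prod_X]
  simp

lemma cmap_cmap (f : MvPolynomial (Fin 4) ℂ) : cmap (cmap f) = scaleVars (-1) f := by
  rw [cmap_eq, scaleVars_scaleVars,
    show ((fun _ => Complex.I) * fun _ => Complex.I : Fin 4 → ℂ) = -1 from
      funext fun _ => by simp]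

lemma prod_X_mem_adjoin :
    (∏ i, X i : MvPolynomial (Fin 4) ℂ) ∈ Algebra.adjoin ℂ {p0, p1, p2, p3, p4} := by
  have : (∏ i, X i : MvPolynomial (Fin 4) ℂ) = C 4⁻¹ * p4 := by
    rw [p4, Fin.prod_univ_four, ← mul_assoc, ← map_ofNat C 4, ← map_mul,
      inv_mul_cancel₀ (by norm_num), map_one, one_mul]
  rw [this]
  exact mul_mem (Subalgebra.algebraMap_mem _ _) (Algebra.subset_adjoin (by simp))

lemma expand_two_mem_adjoin {g : MvPolynomial (Fin 4) ℂ}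
    (hg : g ∈ hadamardSubalgebra ℂ) :
    expand 2 g ∈ Algebra.adjoin ℂ {p0, p1, p2, p3, p4} := by
  set A := Algebra.adjoin ℂ ({p0, p1, p2, p3, p4} : Set (MvPolynomial (Fin 4) ℂ))
  have h0 : p0 ∈ A := Algebra.subset_adjoin (by simp)
  have h1 : p1 ∈ A := Algebra.subset_adjoin (by simp)
  have h2 : p2 ∈ A := Algebra.subset_adjoin (by simp)
  have h3 : p3 ∈ A := Algebra.subset_adjoin (by simp)
  have h4 : p4 ∈ A := Algebra.subset_adjoin (by simp)
  refine Algebra.adjoin_le (S := A.comap (expand 2)) ?_ hg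
  rintro q (rfl | ⟨i, rfl⟩)
  · have : expand 2 (∏ i, hadamard ℂ i) = 2 * p4 ^ 2 + p0 ^ 2 - p1 ^ 2 - p2 ^ 2 - p3 ^ 2 := by
      simp only [hadamard, Fin.prod_univ_four, Matrix.cons_val_zero, Matrix.cons_val_one,
        Matrix.cons_val, map_mul, map_add, map_sub, expand_X, p0, p1, p2, p3, p4]
      ring
    show expand 2 _ ∈ A
    rw [this]
    exact sub_mem (sub_mem (sub_mem (add_mem (mul_mem (ofNat_mem A 2) (pow_mem h4 2))
      (pow_mem h0 2)) (pow_mem h1 2)) (pow_mem h2 2)) (pow_mem h3 2)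
  · have hsq : expand 2 (hadamard ℂ i ^ 2) = p0 + C (![1, 1, -1, -1] i) * p1 +
        C (![1, -1, 1, -1] i) * p2 + C (![1, -1, -1, 1] i) * p3 := by
      fin_cases i <;> simp [hadamard, p0, p1, p2, p3] <;> ring
    have hC : ∀ c : ℂ, C c ∈ A := Subalgebra.algebraMap_mem A
    show expand 2 _ ∈ A
    rw [hsq]
    exact add_mem (add_mem (add_mem h0 (mul_mem (hC _) h1)) (mul_mem (hC _) h2))
      (mul_mem (hC _) h3)

lemma eqOn_generators {φ : MvPolynomial (Fin 4) ℂ →ₐ[ℂ] MvPolynomial (Fin 4) ℂ}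
    (hφ : φ ∈ [h0001, h0010, h0100, h1000, cmap]) :
    Set.EqOn φ (AlgHom.id ℂ _) {p0, p1, p2, p3, p4} := by
  simp only [List.mem_cons, List.not_mem_nil, or_false] at hφ
  rintro q (rfl | rfl | rfl | rfl | rfl) <;>
    rcases hφ with rfl | rfl | rfl | rfl | rfl <;>
    simp [h0001_eq, h0010_eq, h0100_eq, h1000_eq, cmap_eq, swapHalves, swapPairs,
      Function.Involutive.toPerm, p0, p1, p2, p3, p4, map_ofNat] <;>
    ring_nf <;> simp [← C_pow]

/-- A polynomial `f ∈ ℂ[x₀,x₁,x₂,x₃]` is invariant under the five substitutions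
`h₀₀₀₁, h₀₀₁₀, h₀₁₀₀, h₁₀₀₀, c` (which generate the image of the Heisenberg group under
the Schrödinger representation) if and only if `f` lies in the `ℂ`-subalgebra generated
by `p₀, p₁, p₂, p₃, p₄`. -/
theorem heisenberg_invariants (f : MvPolynomial (Fin 4) ℂ) :
    (h0001 f = f ∧ h0010 f = f ∧ h0100 f = f ∧ h1000 f = f ∧ cmap f = f) ↔
      f ∈ Algebra.adjoin ℂ ({p0, p1, p2, p3, p4} : Set (MvPolynomial (Fin 4) ℂ)) := by
  constructor
  · rintro ⟨h13, h23, hP, hH, hc⟩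
    rw [h0001_eq] at h13
    rw [h0010_eq] at h23
    rw [h0100_eq] at hP
    rw [h1000_eq] at hH
    have hneg : scaleVars (-1) f = f := by rw [← cmap_cmap, hc, hc]
    obtain ⟨F, G, rfl⟩ := exists_eq_expand_two_add_prod_X_mul_of_signs h13 h23 hneg
    obtain ⟨hHF, hHG⟩ := invariant_of_expand_two_add_prod_X_mul 0
      (rename_expand 2 _) (rename_prod_X swapHalves) hH
    obtain ⟨hPF, hPG⟩ := invariant_of_expand_two_add_prod_X_mul 0
      (rename_expand 2 _) (rename_prod_X swapPairs) hP
    obtain ⟨hnF, hnG⟩ := invariant_of_expand_two_add_prod_X_mul 0 cmap_expand_two cmap_prod_X hc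
    exact add_mem (expand_two_mem_adjoin (mem_hadamardSubalgebra_of_invariant hHF hPF hnF))
      (mul_mem prod_X_mem_adjoin
        (expand_two_mem_adjoin (mem_hadamardSubalgebra_of_invariant hHG hPG hnG)))
  · intro hf
    refine ⟨?_, ?_, ?_, ?_, ?_⟩ <;>
      exact AlgHom.eqOn_adjoin_iff.mpr (eqOn_generators (by simp)) hf
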